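/- Let p be an odd prime, n ≥ 1, and R a commutative ring in which p·1 = 0. Let F ∈ R⟦X,Y⟧ be a formal group law with F(X,Y) ≡ X + Y modulo (X,Y)^{p^n}, let Aut_F(R) be the group of strict automorphisms of F, let α : Aut_F(R) → G(R) be truncation modulo X^{p^n}, and let β : Q(R) → G(R) be the homomorphism (f₁, f₂) ↦ class of f₂. Then the fiber product C(R) = {(f, q) ∈ Aut_F(R) × Q(R) : α(f) = β(q)} is a subgroup of the product group, the first projection C(R) → Aut_F(R) is a surjective group homomorphism, and its kernel is isomorphic to the additive group R^n. -/

import Mathlib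

open Polynomial

/-- Substitution of a multivariate power series `a` (with zero constant term) for the
variable of a one-variable power series `f`; this is the usual substitution whenever `a`
has zero constant term. -/
noncomputable def substPS {R : Type} [CommRing R] {σ : Type} (a : MvPowerSeries σ R)
    (f : PowerSeries R) : MvPowerSeries σ R :=
  fun d => ∑ m ∈ Finset.range (d.sum (fun _ k => k) + 1),
    PowerSeries.coeff m f * MvPowerSeries.coeff d (a ^ m)

/-- Substitution of two power series `g₀, g₁` (with zero constant terms) for the two
variables of `F ∈ R⟦X,Y⟧`. -/
noncomputable def subst2 {R : Type} [CommRing R] {σ : Type} (g₀ g₁ : MvPowerSeries σ R)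
    (F : MvPowerSeries (Fin 2) R) : MvPowerSeries σ R :=
  fun d => ∑ i ∈ Finset.range (d.sum (fun _ k => k) + 1),
    ∑ j ∈ Finset.range (d.sum (fun _ k => k) + 1),
      MvPowerSeries.coeff (Finsupp.single (0 : Fin 2) i + Finsupp.single (1 : Fin 2) j) F *
        MvPowerSeries.coeff d (g₀ ^ i * g₁ ^ j)

/-!
`α` and `β` turn the products of `Aut_F(R)` and of `Q(R)` into composition of polynomials
modulo `X ^ (p ^ n)`, so closure of `C(R)` under products and inverses is checked in this
truncated composition monoid, where a left inverse of an invertible element is its inverse.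

Surjectivity of the projection needs that the truncation of a strict automorphism `f` is a
`p`-polynomial `X + Σ bₖ X ^ (p ^ k)`. Modulo degree `p ^ n` the law `F` is `X + Y`, so
`f(X + Y) ≡ f(X) + f(Y)`; comparing coefficients of `X ^ j * Y ^ (m - j)` gives
`f_m * (m choose j) = 0`, and when `m < p ^ n` is not a power of `p` some `m choose j` with
`0 < j < m` is prime to `p`, hence a unit in `R`.

The kernel of the projection consists of the pairs `(1, (ε + Σ aᵢ X ^ (p ^ i), X))`, which
multiply by adding the coefficient vectors `a`.
-/

section TruncatedComposition

variable {R : Type*} [CommRing R] {N : ℕ}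

theorem comp_smodEq_comp {u u' v v' : R[X]} (hu' : X ∣ u')
    (hv : v ≡ v' [SMOD Ideal.span {X ^ N}]) (hu : u ≡ u' [SMOD Ideal.span {X ^ N}]) :
    v.comp u ≡ v'.comp u' [SMOD Ideal.span {X ^ N}] := by
  have hvu : v.comp u' ≡ v'.comp u' [SMOD Ideal.span {X ^ N}] := by
    rw [SModEq.sub_mem, Ideal.mem_span_singleton] at hv ⊢
    obtain ⟨w, hw⟩ := hv
    rw [← sub_comp, hw, mul_comp, X_pow_comp]
    exact dvd_mul_of_dvd_left (pow_dvd_pow_of_dvd hu' N) _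
  refine SModEq.trans ?_ hvu
  simpa only [eval_map, comp] using hu.eval (v.map C)

theorem smodEq_of_comp_smodEq_X {u v w w' : R[X]} (hw : X ∣ w) (hw' : X ∣ w')
    (hvw : v ≡ w [SMOD Ideal.span {X ^ N}]) (huv : u.comp v ≡ X [SMOD Ideal.span {X ^ N}])
    (hww' : w.comp w' ≡ X [SMOD Ideal.span {X ^ N}]) : u ≡ w' [SMOD Ideal.span {X ^ N}] := by
  have h₁ : u.comp (w.comp w') ≡ u.comp X [SMOD Ideal.span {X ^ N}] :=
    comp_smodEq_comp dvd_rfl .rfl hww'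
  have h₂ : (u.comp w).comp w' ≡ (u.comp v).comp w' [SMOD Ideal.span {X ^ N}] :=
    comp_smodEq_comp hw' (comp_smodEq_comp hw .rfl hvw).symm .rfl
  have h₃ : (u.comp v).comp w' ≡ X.comp w' [SMOD Ideal.span {X ^ N}] :=
    comp_smodEq_comp hw' huv .rfl
  rw [comp_X, ← comp_assoc] at h₁
  rw [X_comp] at h₃
  exact h₁.symm.trans (h₂.trans h₃)

theorem coeff_comp_eq_sum {u : R[X]} (hu : X ∣ u) (v : R[X]) (k : ℕ) :
    (v.comp u).coeff k = ∑ m ∈ Finset.range (k + 1), v.coeff m * (u ^ m).coeff k := by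
  symm
  rw [comp, eval₂_eq_sum_range' C (n := v.natDegree + k + 1) (by omega), finsetSum_coeff]
  simp only [coeff_C_mul]
  apply Finset.sum_subset (Finset.range_subset_range.mpr (by omega))
  intro m _ hm
  rw [X_pow_dvd_iff.mp (pow_dvd_pow_of_dvd hu m) k (by simpa using hm), mul_zero]

theorem PowerSeries.trunc_smodEq_iff {f : PowerSeries R} {u : R[X]} :
    trunc N f ≡ u [SMOD Ideal.span {Polynomial.X ^ N}] ↔ ∀ k < N, coeff k f = u.coeff k := by
  rw [SModEq.sub_mem, Ideal.mem_span_singleton, Polynomial.X_pow_dvd_iff]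
  refine forall₂_congr fun k hk => ?_
  rw [Polynomial.coeff_sub, sub_eq_zero, coeff_trunc, if_pos hk]

theorem PowerSeries.trunc_X_smodEq (N : ℕ) :
    trunc N (X : PowerSeries R) ≡ Polynomial.X [SMOD Ideal.span {Polynomial.X ^ N}] :=
  trunc_smodEq_iff.mpr fun k _ => by rw [← Polynomial.coe_X, Polynomial.coeff_coe]

end TruncatedComposition

section Substitution

variable {R : Type} [CommRing R]

theorem PowerSeries.coeff_substPS (a f : PowerSeries R) (k : ℕ) :
    coeff k (substPS a f) = ∑ m ∈ Finset.range (k + 1), coeff m f * coeff k (a ^ m) := by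
  change ∑ m ∈ Finset.range ((Finsupp.single () k).sum (fun _ k => k) + 1), _ = _
  rw [Finsupp.sum_single_index rfl]
  rfl

theorem trunc_substPS_smodEq {a : PowerSeries R} (ha : PowerSeries.constantCoeff a = 0)
    (f : PowerSeries R) (N : ℕ) :
    PowerSeries.trunc N (substPS a f) ≡
      (PowerSeries.trunc N f).comp (PowerSeries.trunc N a) [SMOD Ideal.span {X ^ N}] := by
  have hX : X ∣ PowerSeries.trunc N a := X_dvd_iff.mpr (by simp [PowerSeries.coeff_trunc, ha])
  refine PowerSeries.trunc_smodEq_iff.mpr fun k hk => ?_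
  rw [PowerSeries.coeff_substPS, coeff_comp_eq_sum hX]
  refine Finset.sum_congr rfl fun m hm => ?_
  have hpow := congrArg (coeff · k) (PowerSeries.trunc_trunc_pow a N m)
  simp only [PowerSeries.coeff_trunc, if_pos hk, ← coe_pow, coeff_coe] at hpow
  rw [PowerSeries.coeff_trunc, if_pos (by grind), hpow]

end Substitution

section PPolynomial

variable {R : Type*} [CommRing R] {p : ℕ}

noncomputable def pPoly (p n : ℕ) (b : ℕ → R) : R[X] :=
  X + ∑ k ∈ Finset.Ico 1 n, C (b k) * X ^ p ^ k

noncomputable def pSum (p n : ℕ) (a : ℕ → R) : R[X] :=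
  ∑ i ∈ Finset.range n, C (a i) * X ^ p ^ i

theorem coeff_sum_C_mul_X_pow_pow (hp : 1 < p) (s : Finset ℕ) (a : ℕ → R) (j : ℕ) :
    (∑ i ∈ s, C (a i) * X ^ p ^ i).coeff (p ^ j) = if j ∈ s then a j else 0 := by
  simp [finsetSum_coeff, coeff_X_pow, (Nat.pow_right_injective hp).eq_iff]

theorem coeff_sum_C_mul_X_pow_pow_of_ne (s : Finset ℕ) (a : ℕ → R) {k : ℕ}
    (hk : ∀ i, k ≠ p ^ i) : (∑ i ∈ s, C (a i) * X ^ p ^ i).coeff k = 0 := by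
  simp [finsetSum_coeff, coeff_X_pow, hk]

theorem X_dvd_pPoly (hp : p ≠ 0) (n : ℕ) (b : ℕ → R) : X ∣ pPoly p n b :=
  dvd_add dvd_rfl (Finset.dvd_sum fun k _ =>
    dvd_mul_of_dvd_right (dvd_pow_self X (pow_ne_zero k hp)) _)

theorem pPoly_comp (n : ℕ) (b : ℕ → R) (u : R[X]) :
    (pPoly p n b).comp u = u + ∑ k ∈ Finset.Ico 1 n, C (b k) * u ^ p ^ k := by
  simp [pPoly]

theorem coeff_pPoly_pow (hp : 1 < p) (n : ℕ) (b : ℕ → R) (j : ℕ) :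
    (pPoly p n b).coeff (p ^ j) = if j = 0 then 1 else if j < n then b j else 0 := by
  rw [pPoly, coeff_add, coeff_sum_C_mul_X_pow_pow hp, coeff_X]
  rcases eq_or_ne j 0 with rfl | hj
  · simp
  · simp [hj, Nat.one_lt_pow hj hp |>.ne, Nat.one_le_iff_ne_zero.mpr hj]

theorem coeff_pPoly_of_ne (n : ℕ) (b : ℕ → R) {k : ℕ} (hk : ∀ i, k ≠ p ^ i) :
    (pPoly p n b).coeff k = 0 := by
  rw [pPoly, coeff_add, coeff_sum_C_mul_X_pow_pow_of_ne _ _ hk, coeff_X, if_neg, add_zero]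
  simpa using (hk 0).symm

theorem exists_trunc_smodEq_pPoly_of_coeff (hp : 1 < p) (n : ℕ) {f : PowerSeries R}
    (hf1 : PowerSeries.coeff 1 f = 1)
    (hf : ∀ m < p ^ n, (∀ i, m ≠ p ^ i) → PowerSeries.coeff m f = 0) :
    ∃ b, PowerSeries.trunc (p ^ n) f ≡ pPoly p n b [SMOD Ideal.span {X ^ p ^ n}] := by
  refine ⟨fun j => PowerSeries.coeff (p ^ j) f, PowerSeries.trunc_smodEq_iff.mpr fun k hk => ?_⟩
  by_cases hpow : ∃ j, k = p ^ j
  · obtain ⟨j, rfl⟩ := hpow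
    have hjn : j < n := (Nat.pow_lt_pow_iff_right hp).mp hk
    rw [coeff_pPoly_pow hp]
    split_ifs with hj
    · rw [hj, pow_zero, hf1]
    · rfl
  · push Not at hpow
    rw [hf k hk hpow, coeff_pPoly_of_ne _ _ hpow]

theorem pSum_smodEq_iff (hp : 1 < p) {n : ℕ} {a a' : ℕ → R} :
    pSum p n a ≡ pSum p n a' [SMOD Ideal.span {X ^ p ^ n}] ↔ ∀ i < n, a i = a' i := by
  refine ⟨fun h i hi => ?_, fun h => ?_⟩
  · rw [SModEq.sub_mem, Ideal.mem_span_singleton, X_pow_dvd_iff] at h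
    simpa [pSum, sub_eq_zero, coeff_sum_C_mul_X_pow_pow hp, hi] using
      h (p ^ i) (Nat.pow_lt_pow_right hp hi)
  · rw [pSum, Finset.sum_congr rfl fun i hi => by rw [h i (Finset.mem_range.mp hi)]]
    rfl

end PPolynomial

namespace MvPowerSeries

variable {R : Type} [CommRing R] {σ : Type}

theorem coeff_substPS (a : MvPowerSeries σ R) (f : PowerSeries R) (d : σ →₀ ℕ) :
    coeff d (substPS a f) =
      ∑ m ∈ Finset.range (d.degree + 1), PowerSeries.coeff m f * coeff d (a ^ m) :=
  rfl

theorem constantCoeff_substPS (a : MvPowerSeries σ R) (f : PowerSeries R) :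
    constantCoeff (substPS a f) = PowerSeries.coeff 0 f := by
  rw [← coeff_zero_eq_constantCoeff_apply, coeff_substPS]
  simp

theorem coeff_subst2 (g₀ g₁ : MvPowerSeries σ R) (F : MvPowerSeries (Fin 2) R)
    (d : σ →₀ ℕ) :
    coeff d (subst2 g₀ g₁ F) =
      ∑ i ∈ Finset.range (d.degree + 1), ∑ j ∈ Finset.range (d.degree + 1),
        coeff (Finsupp.single 0 i + Finsupp.single 1 j) F * coeff d (g₀ ^ i * g₁ ^ j) :=
  rfl

theorem nat_le_order_of_mem_span_pow {S : Set (MvPowerSeries σ R)}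
    (hS : ∀ s ∈ S, constantCoeff s = 0) {N : ℕ} {x : MvPowerSeries σ R}
    (hx : x ∈ Ideal.span S ^ N) : (N : ℕ∞) ≤ x.order := by
  induction N generalizing x with
  | zero => simp
  | succ N ih =>
    rw [pow_succ] at hx
    induction hx using Submodule.mul_induction_on' with
    | mem_mul_mem m hm y hy =>
      have hy0 : constantCoeff y = 0 :=
        RingHom.mem_ker.mp (Ideal.span_le.mpr (fun s hs => RingHom.mem_ker.mpr (hS s hs)) hy)
      calc ((N + 1 : ℕ) : ℕ∞) = N + 1 := by push_cast; rfl
        _ ≤ m.order + y.order := add_le_add (ih hm) (one_le_order_iff_constCoeff_eq_zero.mpr hy0)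
        _ ≤ (m * y).order := le_order_mul
    | add x y _ _ hx hy => exact (le_min hx hy).trans min_order_le_add

variable {S : Set (MvPowerSeries σ R)} {N : ℕ}

theorem coeff_eq_of_sub_mem_span_pow (hS : ∀ s ∈ S, constantCoeff s = 0)
    {x y : MvPowerSeries σ R} (h : x - y ∈ Ideal.span S ^ N) {d : σ →₀ ℕ}
    (hd : d.degree < N) :
    coeff d x = coeff d y := by
  rw [← sub_eq_zero, ← map_sub]
  exact coeff_of_lt_order ((Nat.cast_lt.mpr hd).trans_le (nat_le_order_of_mem_span_pow hS h))

theorem coeff_substPS_eq_of_sub_mem (hS : ∀ s ∈ S, constantCoeff s = 0)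
    {a a' : MvPowerSeries σ R} (h : a - a' ∈ Ideal.span S ^ N) (f : PowerSeries R)
    {d : σ →₀ ℕ} (hd : d.degree < N) : coeff d (substPS a f) = coeff d (substPS a' f) := by
  rw [coeff_substPS, coeff_substPS]
  refine Finset.sum_congr rfl fun m _ => ?_
  obtain ⟨t, ht⟩ := sub_dvd_pow_sub_pow a a' m
  rw [coeff_eq_of_sub_mem_span_pow hS (ht ▸ Ideal.mul_mem_right t _ h) hd]

theorem coeff_subst2_eq_of_sub_mem {S : Set (MvPowerSeries (Fin 2) R)}
    (hS : ∀ s ∈ S, constantCoeff s = 0) {F F' : MvPowerSeries (Fin 2) R}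
    (h : F - F' ∈ Ideal.span S ^ N) {g₀ g₁ : MvPowerSeries σ R}
    (h₀ : constantCoeff g₀ = 0) (h₁ : constantCoeff g₁ = 0) {d : σ →₀ ℕ}
    (hd : d.degree < N) :
    coeff d (subst2 g₀ g₁ F) = coeff d (subst2 g₀ g₁ F') := by
  rw [coeff_subst2, coeff_subst2]
  refine Finset.sum_congr rfl fun i _ => Finset.sum_congr rfl fun j _ => ?_
  by_cases hij : i + j < N
  · rw [coeff_eq_of_sub_mem_span_pow hS h (by simpa using hij)]
  · have hord : ((i + j : ℕ) : ℕ∞) ≤ (g₀ ^ i * g₁ ^ j).order :=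
      calc ((i + j : ℕ) : ℕ∞) = i + j := by push_cast; rfl
        _ ≤ (g₀ ^ i).order + (g₁ ^ j).order :=
          add_le_add (le_order_pow_of_constantCoeff_eq_zero i h₀)
            (le_order_pow_of_constantCoeff_eq_zero j h₁)
        _ ≤ _ := le_order_mul
    rw [coeff_of_lt_order ((Nat.cast_lt.mpr (by omega)).trans_le hord), mul_zero, mul_zero]

theorem coeff_substPS_X_of_ne [DecidableEq σ] (s : σ) (f : PowerSeries R) {d : σ →₀ ℕ}
    (hd : ∀ m, d ≠ Finsupp.single s m) : coeff d (substPS (X s) f) = 0 := by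
  rw [coeff_substPS]
  refine Finset.sum_eq_zero fun m _ => ?_
  rw [X_pow_eq, coeff_monomial, if_neg (hd m), mul_zero]

theorem coeff_substPS_X_add_X (f : PowerSeries R) (d : Fin 2 →₀ ℕ) :
    coeff d (substPS (X 0 + X 1) f) =
      PowerSeries.coeff d.degree f * (d.degree.choose (d 0) : R) := by
  have hdeg : d.degree = d 0 + d 1 := by simp [Finsupp.degree_eq_sum]
  rw [coeff_substPS]
  have hpow : ∀ m, (X 0 + X 1 : MvPowerSeries (Fin 2) R) ^ m =
      ((MvPolynomial.X 0 + MvPolynomial.X 1 : MvPolynomial (Fin 2) R) ^ m :) := by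
    intro m; push_cast; rfl
  simp only [hpow, MvPolynomial.coeff_coe, MvPolynomial.coeff_add_pow, Nat.cast_ite,
    Nat.cast_zero, mul_ite, mul_zero, Finset.HasAntidiagonal.mem_antidiagonal, ← hdeg]
  rw [Finset.sum_ite_eq]
  simp

theorem coeff_subst2_X_add_X {g₀ g₁ : MvPowerSeries σ R} (h₀ : constantCoeff g₀ = 0)
    (h₁ : constantCoeff g₁ = 0) (d : σ →₀ ℕ) :
    coeff d (subst2 g₀ g₁ (X 0 + X 1)) = coeff d (g₀ + g₁) := by
  rcases eq_or_ne d 0 with rfl | hd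
  · simp [coeff_subst2, h₀, h₁]
  have hX : ∀ i j, coeff (Finsupp.single 0 i + Finsupp.single 1 j)
      (X 0 + X 1 : MvPowerSeries (Fin 2) R) =
      (if i = 1 ∧ j = 0 then 1 else 0) + (if i = 0 ∧ j = 1 then 1 else 0) := by
    intro i j
    simp [coeff_X, Finsupp.ext_iff, Fin.forall_fin_two]
  have h1 : 1 < d.degree + 1 := by
    simpa [Nat.pos_iff_ne_zero, Finsupp.degree_eq_zero_iff] using hd
  simp [coeff_subst2, hX, add_mul, Finset.sum_add_distrib, ite_and, h1]

end MvPowerSeries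

theorem isUnit_natCast_of_not_dvd {R : Type*} [CommRing R] {p c : ℕ} (hp : p.Prime)
    (hpR : (p : R) = 0) (hc : ¬ p ∣ c) : IsUnit (c : R) := by
  have hcop : IsCoprime (c : ℤ) p :=
    Nat.isCoprime_iff_coprime.mpr (Nat.coprime_comm.mp ((hp.coprime_iff_not_dvd).mpr hc))
  exact isCoprime_zero_right.mp (by simpa [hpR] using hcop.map (Int.castRingHom R))

theorem exists_not_dvd_choose_of_ne_pow {p m : ℕ} (hp : p.Prime) (hm0 : m ≠ 0)
    (hm : ∀ i, m ≠ p ^ i) : ∃ j ∈ Finset.Icc 1 (m - 1), ¬ p ∣ m.choose j := by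
  have := Fact.mk hp
  by_contra! h
  exact hm _ (Choose.eq_pow_multiplicity_of_choose_modEq_zero_nat (Nat.pos_of_ne_zero hm0)
    fun j hj => Nat.modEq_zero_iff_dvd.mpr (h j hj))

section StrictEndomorphism

variable {R : Type} [CommRing R]

def IsStrictEndo (F : MvPowerSeries (Fin 2) R) (f : PowerSeries R) : Prop :=
  f - PowerSeries.X ∈ Ideal.span {PowerSeries.X ^ 2} ∧
    substPS F f = subst2 (substPS (MvPowerSeries.X 0) f) (substPS (MvPowerSeries.X 1) f) F

namespace IsStrictEndo

open MvPowerSeries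

variable {F : MvPowerSeries (Fin 2) R} {f : PowerSeries R}

theorem coeff_eq_coeff_X (hf : IsStrictEndo F f) {k : ℕ} (hk : k < 2) :
    PowerSeries.coeff k f = PowerSeries.coeff k PowerSeries.X := by
  have h := hf.1
  rw [Ideal.mem_span_singleton, PowerSeries.X_pow_dvd_iff] at h
  simpa [sub_eq_zero] using h k hk

theorem constantCoeff_eq_zero (hf : IsStrictEndo F f) : PowerSeries.constantCoeff f = 0 := by
  simpa using hf.coeff_eq_coeff_X zero_lt_two

theorem coeff_degree_mul_choose_eq_zero {N : ℕ}
    (hF : F - (X 0 + X 1) ∈ Ideal.span {X 0, X 1} ^ N) (hf : IsStrictEndo F f)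
    {d : Fin 2 →₀ ℕ} (hd0 : d 0 ≠ 0) (hd1 : d 1 ≠ 0) (hdN : d.degree < N) :
    PowerSeries.coeff d.degree f * (d.degree.choose (d 0) : R) = 0 := by
  have hS : ∀ s ∈ ({X 0, X 1} : Set (MvPowerSeries (Fin 2) R)), constantCoeff s = 0 := by
    simp
  have hg : ∀ i, constantCoeff (substPS (X i : MvPowerSeries (Fin 2) R) f) = 0 := fun i => by
    rw [constantCoeff_substPS, PowerSeries.coeff_zero_eq_constantCoeff_apply,
      hf.constantCoeff_eq_zero]
  have hmixed : ∀ i m, d ≠ Finsupp.single i m := by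
    intro i m h
    fin_cases i
    · exact hd1 (by simp [h])
    · exact hd0 (by simp [h])
  calc _ = coeff d (substPS (X 0 + X 1) f) := (coeff_substPS_X_add_X f d).symm
    _ = coeff d (substPS F f) := (coeff_substPS_eq_of_sub_mem hS hF f hdN).symm
    _ = coeff d (subst2 (substPS (X 0) f) (substPS (X 1) f) F) := by rw [hf.2]
    _ = coeff d (subst2 (substPS (X 0) f) (substPS (X 1) f) (X 0 + X 1)) :=
      coeff_subst2_eq_of_sub_mem hS hF (hg 0) (hg 1) hdN
    _ = 0 := by
      rw [coeff_subst2_X_add_X (hg 0) (hg 1), map_add, coeff_substPS_X_of_ne 0 f (hmixed 0),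
        coeff_substPS_X_of_ne 1 f (hmixed 1), add_zero]

theorem coeff_eq_zero_of_ne_pow {p N : ℕ} (hp : p.Prime) (hpR : (p : R) = 0)
    (hF : F - (X 0 + X 1) ∈ Ideal.span {X 0, X 1} ^ N) (hf : IsStrictEndo F f)
    {m : ℕ} (hmN : m < N) (hm : ∀ i, m ≠ p ^ i) : PowerSeries.coeff m f = 0 := by
  rcases eq_or_ne m 0 with rfl | hm0
  · rw [PowerSeries.coeff_zero_eq_constantCoeff_apply, hf.constantCoeff_eq_zero]
  obtain ⟨j, hj, hndvd⟩ := exists_not_dvd_choose_of_ne_pow hp hm0 hm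
  rw [Finset.mem_Icc] at hj
  set d : Fin 2 →₀ ℕ := Finsupp.single 0 j + Finsupp.single 1 (m - j)
  have hdeg : d.degree = m := by
    rw [map_add, Finsupp.degree_single, Finsupp.degree_single]
    omega
  have hmul := hf.coeff_degree_mul_choose_eq_zero hF (d := d) (by simp [d]; omega)
    (by simp [d]; omega) (hdeg ▸ hmN)
  rw [hdeg, show d 0 = j by simp [d]] at hmul
  exact (isUnit_natCast_of_not_dvd hp hpR hndvd).mul_left_eq_zero.mp hmul

theorem exists_trunc_smodEq_pPoly {p n : ℕ} (hp : p.Prime) (hpR : (p : R) = 0)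
    (hF : F - (X 0 + X 1) ∈ Ideal.span {X 0, X 1} ^ p ^ n) (hf : IsStrictEndo F f) :
    ∃ b, PowerSeries.trunc (p ^ n) f ≡ pPoly p n b [SMOD Ideal.span {Polynomial.X ^ p ^ n}] :=
  exists_trunc_smodEq_pPoly_of_coeff hp.one_lt n (by simpa using hf.coeff_eq_coeff_X one_lt_two)
    fun _ hm hne => hf.coeff_eq_zero_of_ne_pow hp hpR hF hm hne

end IsStrictEndo

end StrictEndomorphism

section QuotientRing

variable {R : Type*} [CommRing R] {N p n : ℕ}

theorem aeval_X_one_mem_span_iff (u : R[X]) :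
    aeval (MvPolynomial.X 1 : MvPolynomial (Fin 2) R) u ∈
        Ideal.span {MvPolynomial.X 0 ^ 2, MvPolynomial.X 1 ^ N} ↔
      u ∈ Ideal.span {X ^ N} := by
  constructor
  · intro h
    let φ : MvPolynomial (Fin 2) R →ₐ[R] R[X] := MvPolynomial.aeval ![0, X]
    have hφ : φ.comp (aeval (MvPolynomial.X 1)) = AlgHom.id R R[X] :=
      algHom_ext (by simp [φ])
    have := Ideal.mem_map_of_mem φ h
    rw [Ideal.map_span, Set.image_pair, ← AlgHom.comp_apply, hφ] at this
    simpa [φ] using this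
  · rw [Ideal.mem_span_singleton]
    rintro ⟨w, rfl⟩
    rw [map_mul, map_pow, aeval_X]
    exact Ideal.mul_mem_right _ _ (Ideal.subset_span (by simp))

theorem aeval_X_one_smodEq_iff {u v : R[X]} :
    aeval (MvPolynomial.X 1 : MvPolynomial (Fin 2) R) u ≡ aeval (MvPolynomial.X 1) v
        [SMOD Ideal.span {MvPolynomial.X 0 ^ 2, MvPolynomial.X 1 ^ N}] ↔
      u ≡ v [SMOD Ideal.span {X ^ N}] := by
  rw [SModEq.sub_mem, SModEq.sub_mem, ← map_sub, aeval_X_one_mem_span_iff]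

/-- In `R[ε, X] / (ε², X ^ (p ^ n))`, `ε` is `X 0` and `X` is `X 1`. -/
noncomputable def qFst (p n : ℕ) (a : ℕ → R) : MvPolynomial (Fin 2) R :=
  MvPolynomial.X 0 + aeval (MvPolynomial.X 1) (pSum p n a)

noncomputable def qSnd (p n : ℕ) (b : ℕ → R) : MvPolynomial (Fin 2) R :=
  aeval (MvPolynomial.X 1) (pPoly p n b)

variable {I : Ideal (MvPolynomial (Fin 2) R)}

theorem mk_qFst_eq_mk_qFst_iff
    (hI : I = Ideal.span {MvPolynomial.X 0 ^ 2, MvPolynomial.X 1 ^ p ^ n}) (hp : 1 < p)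
    {a a' : ℕ → R} :
    Ideal.Quotient.mk I (qFst p n a) = Ideal.Quotient.mk I (qFst p n a') ↔
      ∀ i < n, a i = a' i := by
  rw [← SModEq.idealQuotientMk, hI, qFst, qFst, SModEq.sub_mem, add_sub_add_left_eq_sub,
    ← SModEq.sub_mem, aeval_X_one_smodEq_iff, pSum_smodEq_iff hp]

theorem mk_qSnd_eq_mk_aeval_iff
    (hI : I = Ideal.span {MvPolynomial.X 0 ^ 2, MvPolynomial.X 1 ^ p ^ n})
    {b : ℕ → R} {u : R[X]} :
    Ideal.Quotient.mk I (qSnd p n b) = Ideal.Quotient.mk I (aeval (MvPolynomial.X 1) u) ↔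
      pPoly p n b ≡ u [SMOD Ideal.span {X ^ p ^ n}] := by
  rw [← SModEq.idealQuotientMk, hI, qSnd, aeval_X_one_smodEq_iff]

theorem qSnd_add_sum_pow (b d : ℕ → R) :
    qSnd p n b + ∑ i ∈ Finset.Ico 1 n, MvPolynomial.C (d i) * qSnd p n b ^ p ^ i =
      aeval (MvPolynomial.X 1) ((pPoly p n d).comp (pPoly p n b)) := by
  simp [qSnd, pPoly_comp, MvPolynomial.algebraMap_eq]

theorem mk_qFst_add_sum_pow {w : MvPolynomial (Fin 2) R}
    (hw : Ideal.Quotient.mk I w = Ideal.Quotient.mk I (MvPolynomial.X 1)) (a c : ℕ → R) :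
    Ideal.Quotient.mk I (qFst p n a + ∑ i ∈ Finset.range n, MvPolynomial.C (c i) * w ^ p ^ i) =
      Ideal.Quotient.mk I (qFst p n (a + c)) := by
  simp only [map_add, map_sum, map_mul, map_pow, hw]
  simp [qFst, pSum, MvPolynomial.algebraMap_eq, Finset.sum_add_distrib, add_mul, add_assoc]

theorem exists_coeffs_of_snd_eq_X
    (hI : I = Ideal.span {MvPolynomial.X 0 ^ 2, MvPolynomial.X 1 ^ p ^ n}) (hp : 1 < p)
    {Q : Set ((MvPolynomial (Fin 2) R ⧸ I) × (MvPolynomial (Fin 2) R ⧸ I))}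
    (hQ : Q = {q | ∃ a b : ℕ → R,
      q = (Ideal.Quotient.mk I (qFst p n a), Ideal.Quotient.mk I (qSnd p n b))})
    {mulQ : Q → Q → Q}
    (hmulQ : ∀ (a b c d : ℕ → R) (x y : Q),
      x.1 = (Ideal.Quotient.mk I (qFst p n a), Ideal.Quotient.mk I (qSnd p n b)) →
      y.1 = (Ideal.Quotient.mk I (qFst p n c), Ideal.Quotient.mk I (qSnd p n d)) →
      (mulQ x y).1.1 = Ideal.Quotient.mk I
        (qFst p n a + ∑ i ∈ Finset.range n, MvPolynomial.C (c i) * qSnd p n b ^ p ^ i)) :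
    ∃ e : Q → Fin n → R,
      (∀ q q' : Q, q.1.2 = Ideal.Quotient.mk I (MvPolynomial.X 1) →
        q'.1.2 = Ideal.Quotient.mk I (MvPolynomial.X 1) → e q = e q' → q = q') ∧
      (∀ v, ∃ q : Q, q.1.2 = Ideal.Quotient.mk I (MvPolynomial.X 1) ∧ e q = v) ∧
      ∀ q q' : Q, q.1.2 = Ideal.Quotient.mk I (MvPolynomial.X 1) →
        e (mulQ q q') = e q + e q' := by
  choose a b hab using fun q : Q => (Set.ext_iff.mp hQ q.1).mp q.2
  have hfst : ∀ (q : Q) a', q.1.1 = Ideal.Quotient.mk I (qFst p n a') →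
      ∀ i < n, a q i = a' i :=
    fun q a' h => (mk_qFst_eq_mk_qFst_iff hI hp).mp ((congrArg Prod.fst (hab q)).symm.trans h)
  refine ⟨fun q i => a q i, fun q q' hq hq' h => ?_, fun v => ?_, fun q q' hq => ?_⟩
  · refine Subtype.ext (Prod.ext ?_ (hq.trans hq'.symm))
    rw [hab q, hab q']
    exact (mk_qFst_eq_mk_qFst_iff hI hp).mpr fun i hi => congrFun h ⟨i, hi⟩
  · let a' : ℕ → R := fun i => if h : i < n then v ⟨i, h⟩ else 0
    refine ⟨⟨_, (Set.ext_iff.mp hQ _).mpr ⟨a', 0, rfl⟩⟩, ?_, funext fun i => ?_⟩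
    · simp [qSnd, pPoly]
    · simpa [a'] using hfst _ a' rfl i i.2
  · have hw : Ideal.Quotient.mk I (qSnd p n (b q)) = Ideal.Quotient.mk I (MvPolynomial.X 1) :=
      (congrArg Prod.snd (hab q)).symm.trans hq
    funext i
    exact hfst _ _ ((hmulQ _ _ _ _ q q' (hab q) (hab q')).trans (mk_qFst_add_sum_pow hw _ _)) i i.2

end QuotientRing

theorem exists_bijective_of_kernel_fst {A Q M : Type*} [Add M] {C : Set (A × Q)} {one : A}
    {mulA : A → A → A} {mulQ : Q → Q → Q} (K : Q → Prop)
    (hK : ∀ q, (one, q) ∈ C ↔ K q)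
    (e : Q → M) (hinj : ∀ q q', K q → K q' → e q = e q' → q = q')
    (hsurj : ∀ v, ∃ q, K q ∧ e q = v) (hadd : ∀ q q', K q → e (mulQ q q') = e q + e q') :
    ∃ e' : {c : {x : A × Q // x ∈ C} // c.1.1 = one} → M, Function.Bijective e' ∧
      ∀ c c' d : {c : {x : A × Q // x ∈ C} // c.1.1 = one},
        d.1.1 = (mulA c.1.1.1 c'.1.1.1, mulQ c.1.1.2 c'.1.1.2) → e' d = e' c + e' c' := by
  refine ⟨fun c => e c.1.1.2, ⟨?_, fun v => ?_⟩, ?_⟩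
  · rintro ⟨⟨⟨f, q⟩, hfq⟩, hf⟩ ⟨⟨⟨f', q'⟩, hfq'⟩, hf'⟩ h
    dsimp only at hf hf' h
    subst hf hf'
    obtain rfl := hinj q q' ((hK q).mp hfq) ((hK q').mp hfq') h
    rfl
  · obtain ⟨q, hq, rfl⟩ := hsurj v
    exact ⟨⟨⟨(one, q), (hK q).mpr hq⟩, rfl⟩, rfl⟩
  · rintro ⟨⟨⟨f, q⟩, hfq⟩, hf⟩ c' d hd
    dsimp only at hf
    subst hf
    change e d.1.1.2 = _
    rw [hd]
    exact hadd q _ ((hK q).mp hfq)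

theorem stmt_15_general (p n : ℕ) (hp : p.Prime)
    (R : Type) [CommRing R] (hpR : (p : R) = 0)
    -- the formal group law F
    (F : MvPowerSeries (Fin 2) R)
    (hFadd : F - (MvPowerSeries.X 0 + MvPowerSeries.X 1) ∈
      (Ideal.span {(MvPowerSeries.X 0 : MvPowerSeries (Fin 2) R),
        MvPowerSeries.X 1}) ^ (p ^ n))
    -- Aut_F(R): the group of strict automorphisms of F, with product f·g = g∘f
    (A : Set (PowerSeries R))
    (hA : A = {f | f - PowerSeries.X ∈ Ideal.span {(PowerSeries.X : PowerSeries R) ^ 2} ∧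
      substPS F f =
        subst2 (substPS (MvPowerSeries.X 0 : MvPowerSeries (Fin 2) R) f)
          (substPS (MvPowerSeries.X 1 : MvPowerSeries (Fin 2) R) f) F})
    (mulA : A → A → A)
    (hmulA : ∀ f g : A, (mulA f g).1 = substPS f.1 g.1)
    (oneA : A) (hOneA : oneA.1 = PowerSeries.X)
    (invA : A → A)
    (hinvA : ∀ f, mulA (invA f) f = oneA ∧ mulA f (invA f) = oneA)
    -- Q(R)
    (I : Ideal (MvPolynomial (Fin 2) R))
    (hI : I = Ideal.span {MvPolynomial.X 0 ^ 2, MvPolynomial.X 1 ^ (p ^ n)})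
    (F1 F2 : (ℕ → R) → MvPolynomial (Fin 2) R)
    (hF1 : ∀ a, F1 a = MvPolynomial.X 0 +
      ∑ i ∈ Finset.range n, MvPolynomial.C (a i) * MvPolynomial.X 1 ^ (p ^ i))
    (hF2 : ∀ b, F2 b = MvPolynomial.X 1 +
      ∑ i ∈ Finset.Ico 1 n, MvPolynomial.C (b i) * MvPolynomial.X 1 ^ (p ^ i))
    (Q : Set ((MvPolynomial (Fin 2) R ⧸ I) × (MvPolynomial (Fin 2) R ⧸ I)))
    (hQ : Q = {q | ∃ a b : ℕ → R,
      q = (Ideal.Quotient.mk I (F1 a), Ideal.Quotient.mk I (F2 b))})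
    (mulQ : Q → Q → Q)
    (hmulQ : ∀ (a b c d : ℕ → R) (x y : Q),
      x.1 = (Ideal.Quotient.mk I (F1 a), Ideal.Quotient.mk I (F2 b)) →
      y.1 = (Ideal.Quotient.mk I (F1 c), Ideal.Quotient.mk I (F2 d)) →
      (mulQ x y).1 =
        (Ideal.Quotient.mk I (F1 a + ∑ i ∈ Finset.range n,
            MvPolynomial.C (c i) * (F2 b) ^ (p ^ i)),
         Ideal.Quotient.mk I (F2 b + ∑ i ∈ Finset.Ico 1 n,
            MvPolynomial.C (d i) * (F2 b) ^ (p ^ i))))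
    (oneQ : Q)
    (hOneQ : oneQ.1 =
      (Ideal.Quotient.mk I (MvPolynomial.X 0), Ideal.Quotient.mk I (MvPolynomial.X 1)))
    (invQ : Q → Q)
    (hinvQ : ∀ x, mulQ (invQ x) x = oneQ ∧ mulQ x (invQ x) = oneQ)
    -- G(R)
    (J : Ideal (Polynomial R))
    (hJ : J = Ideal.span {(X : Polynomial R) ^ (p ^ n)})
    (f2p : (ℕ → R) → Polynomial R)
    (hf2p : ∀ b, f2p b = X + ∑ k ∈ Finset.Ico 1 n, C (b k) * X ^ (p ^ k))
    (G : Set (Polynomial R ⧸ J))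
    -- α : Aut_F(R) → G(R) is truncation modulo X^(p^n)
    (α : A → G)
    (hα : ∀ f : A, (α f).1 = Ideal.Quotient.mk J (PowerSeries.trunc (p ^ n) f.1))
    -- β : Q(R) → G(R) sends (f₁, f₂) to the class of f₂
    (β : Q → G)
    (hβ : ∀ (a b : ℕ → R) (x : Q),
      x.1 = (Ideal.Quotient.mk I (F1 a), Ideal.Quotient.mk I (F2 b)) →
      (β x).1 = Ideal.Quotient.mk J (f2p b))
    -- the fiber product C(R)
    (Cset : Set (A × Q))
    (hC : Cset = {x | α x.1 = β x.2}) :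
    -- C(R) is a subgroup of the product group
    ((oneA, oneQ) ∈ Cset ∧
      (∀ x ∈ Cset, ∀ y ∈ Cset, (mulA x.1 y.1, mulQ x.2 y.2) ∈ Cset) ∧
      (∀ x ∈ Cset, (invA x.1, invQ x.2) ∈ Cset)) ∧
    -- the first projection C(R) → Aut_F(R) is a surjective group homomorphism
    ((∀ f : A, ∃ c ∈ Cset, c.1 = f) ∧
      (∀ c c' d : {x : A × Q // x ∈ Cset},
        d.1 = (mulA c.1.1 c'.1.1, mulQ c.1.2 c'.1.2) →
        d.1.1 = mulA c.1.1 c'.1.1)) ∧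
    -- the kernel of the first projection is isomorphic to the additive group R^n
    (∃ e : {c : {x : A × Q // x ∈ Cset} // c.1.1 = oneA} → (Fin n → R),
      Function.Bijective e ∧
      (∀ c c' d : {c : {x : A × Q // x ∈ Cset} // c.1.1 = oneA},
        d.1.1 = (mulA c.1.1.1 c'.1.1.1, mulQ c.1.1.2 c'.1.1.2) →
        e d = e c + e c')) := by
  subst hJ hC
  obtain rfl : F1 = qFst p n := funext fun a => by
    simp [hF1, qFst, pSum, MvPolynomial.algebraMap_eq]
  obtain rfl : F2 = qSnd p n := funext fun b => by
    simp [hF2, qSnd, pPoly, MvPolynomial.algebraMap_eq]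
  choose a b hab using fun q : Q => (Set.ext_iff.mp hQ q.1).mp q.2
  have hAmem : ∀ f : A, IsStrictEndo F f.1 := fun f => (Set.ext_iff.mp hA f.1).mp f.2
  have hfib : ∀ f q, α f = β q ↔
      PowerSeries.trunc (p ^ n) f.1 ≡ pPoly p n (b q) [SMOD Ideal.span {X ^ p ^ n}] := by
    intro f q
    rw [Subtype.ext_iff, hα, hβ _ _ q (hab q), hf2p]
    rfl
  have hsnd : ∀ (q : Q) u, q.1.2 = Ideal.Quotient.mk I (aeval (MvPolynomial.X 1) u) ↔
      pPoly p n (b q) ≡ u [SMOD Ideal.span {X ^ p ^ n}] := fun q u => by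
    rw [hab q]
    exact mk_qSnd_eq_mk_aeval_iff hI
  have hAmul : ∀ f g : A, PowerSeries.trunc (p ^ n) (mulA f g).1 ≡
      (PowerSeries.trunc (p ^ n) g.1).comp (PowerSeries.trunc (p ^ n) f.1)
        [SMOD Ideal.span {X ^ p ^ n}] := fun f g => by
    rw [hmulA]
    exact trunc_substPS_smodEq (hAmem f).constantCoeff_eq_zero _ _
  have hQmul : ∀ q q' : Q, pPoly p n (b (mulQ q q')) ≡ (pPoly p n (b q')).comp (pPoly p n (b q))
      [SMOD Ideal.span {X ^ p ^ n}] := fun q q' => (hsnd _ _).mp <| by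
    rw [congrArg Prod.snd (hmulQ _ _ _ _ q q' (hab q) (hab q')), qSnd_add_sum_pow]
  have hOneA' : PowerSeries.trunc (p ^ n) oneA.1 ≡ X [SMOD Ideal.span {X ^ p ^ n}] :=
    hOneA ▸ PowerSeries.trunc_X_smodEq _
  have hOneQ' : pPoly p n (b oneQ) ≡ X [SMOD Ideal.span {X ^ p ^ n}] :=
    (hsnd _ _).mp (by rw [hOneQ, aeval_X])
  have hXdvd : ∀ q, X ∣ pPoly p n (b q) := fun q => X_dvd_pPoly hp.ne_zero n (b q)
  refine ⟨⟨(hfib _ _).mpr (hOneA'.trans hOneQ'.symm), ?_, ?_⟩,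
    ⟨fun f => ?_, fun _ _ _ h => by rw [h]⟩, ?_⟩
  · rintro ⟨f, q⟩ hfq ⟨g, q'⟩ hgq'
    refine (hfib _ _).mpr ((hAmul f g).trans (SModEq.trans ?_ (hQmul q q').symm))
    exact comp_smodEq_comp (hXdvd q) ((hfib _ _).mp hgq') ((hfib _ _).mp hfq)
  · rintro ⟨f, q⟩ hfq
    refine (hfib _ _).mpr (smodEq_of_comp_smodEq_X (hXdvd q) (hXdvd (invQ q))
      ((hfib _ _).mp hfq) ((hAmul _ _).symm.trans ?_) ((hQmul _ _).symm.trans ?_))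
    · exact (hinvA f).2 ▸ hOneA'
    · exact (hinvQ q).1 ▸ hOneQ'
  · obtain ⟨b', hb'⟩ := (hAmem f).exists_trunc_smodEq_pPoly hp hpR hFadd
    refine ⟨(f, ⟨_, (Set.ext_iff.mp hQ _).mpr ⟨0, b', rfl⟩⟩), ?_, rfl⟩
    show α f = β _
    rw [Subtype.ext_iff, hα, hβ 0 b' _ rfl, hf2p]
    exact hb'
  obtain ⟨e, hinj, hsurj, hadd⟩ := exists_coeffs_of_snd_eq_X hI hp.one_lt hQ
    fun _ _ _ _ x y hx hy => congrArg Prod.fst (hmulQ _ _ _ _ x y hx hy)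
  refine exists_bijective_of_kernel_fst _ (fun q => ?_) e hinj hsurj hadd
  rw [← aeval_X (R := R) (MvPolynomial.X 1 : MvPolynomial (Fin 2) R), hsnd]
  exact ⟨fun h => ((hfib _ _).mp h).symm.trans hOneA',
    fun h => (hfib _ _).mpr (hOneA'.trans h.symm)⟩

/-- Let `p` be an odd prime, `n ≥ 1`, `R` a commutative ring with `p·1 = 0`,
`F ∈ R⟦X,Y⟧` a formal group law with `F(X,Y) ≡ X + Y mod (X,Y)^(p^n)`, `Aut_F(R)` the group
of strict automorphisms of `F` (product `f·g = g∘f`), `α : Aut_F(R) → G(R)` truncation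
modulo `X^(p^n)`, and `β : Q(R) → G(R)` the homomorphism `(f₁,f₂) ↦ class of f₂`.  Then the
fiber product `C(R) = {(f,q) : α(f) = β(q)}` is a subgroup of the product group, the first
projection `C(R) → Aut_F(R)` is a surjective group homomorphism, and its kernel is
isomorphic to the additive group `R^n`. -/
theorem stmt_15 (p n : ℕ) (hp : p.Prime) (hodd : Odd p) (hn : 1 ≤ n)
    (R : Type) [CommRing R] (hpR : (p : R) = 0)
    -- the formal group law F
    (F : MvPowerSeries (Fin 2) R)
    (hF0 : MvPowerSeries.constantCoeff F = 0)
    (hFX : subst2 (MvPowerSeries.X 0) 0 F = (MvPowerSeries.X 0 : MvPowerSeries (Fin 2) R))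
    (hFY : subst2 0 (MvPowerSeries.X 1) F = (MvPowerSeries.X 1 : MvPowerSeries (Fin 2) R))
    (hFcomm : subst2 (MvPowerSeries.X 1) (MvPowerSeries.X 0) F = F)
    (hFassoc :
      subst2 (subst2 (MvPowerSeries.X 0) (MvPowerSeries.X 1) F)
          (MvPowerSeries.X 2 : MvPowerSeries (Fin 3) R) F =
        subst2 (MvPowerSeries.X 0 : MvPowerSeries (Fin 3) R)
          (subst2 (MvPowerSeries.X 1) (MvPowerSeries.X 2) F) F)
    (hFadd : F - (MvPowerSeries.X 0 + MvPowerSeries.X 1) ∈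
      (Ideal.span {(MvPowerSeries.X 0 : MvPowerSeries (Fin 2) R),
        MvPowerSeries.X 1}) ^ (p ^ n))
    -- Aut_F(R): the group of strict automorphisms of F, with product f·g = g∘f
    (A : Set (PowerSeries R))
    (hA : A = {f | f - PowerSeries.X ∈ Ideal.span {(PowerSeries.X : PowerSeries R) ^ 2} ∧
      substPS F f =
        subst2 (substPS (MvPowerSeries.X 0 : MvPowerSeries (Fin 2) R) f)
          (substPS (MvPowerSeries.X 1 : MvPowerSeries (Fin 2) R) f) F})
    (mulA : A → A → A)
    (hmulA : ∀ f g : A, (mulA f g).1 = substPS f.1 g.1)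
    (oneA : A) (hOneA : oneA.1 = PowerSeries.X)
    (invA : A → A)
    (hinvA : ∀ f, mulA (invA f) f = oneA ∧ mulA f (invA f) = oneA)
    -- Q(R)
    (I : Ideal (MvPolynomial (Fin 2) R))
    (hI : I = Ideal.span {MvPolynomial.X 0 ^ 2, MvPolynomial.X 1 ^ (p ^ n)})
    (F1 F2 : (ℕ → R) → MvPolynomial (Fin 2) R)
    (hF1 : ∀ a, F1 a = MvPolynomial.X 0 +
      ∑ i ∈ Finset.range n, MvPolynomial.C (a i) * MvPolynomial.X 1 ^ (p ^ i))
    (hF2 : ∀ b, F2 b = MvPolynomial.X 1 +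
      ∑ i ∈ Finset.Ico 1 n, MvPolynomial.C (b i) * MvPolynomial.X 1 ^ (p ^ i))
    (Q : Set ((MvPolynomial (Fin 2) R ⧸ I) × (MvPolynomial (Fin 2) R ⧸ I)))
    (hQ : Q = {q | ∃ a b : ℕ → R,
      q = (Ideal.Quotient.mk I (F1 a), Ideal.Quotient.mk I (F2 b))})
    (mulQ : Q → Q → Q)
    (hmulQ : ∀ (a b c d : ℕ → R) (x y : Q),
      x.1 = (Ideal.Quotient.mk I (F1 a), Ideal.Quotient.mk I (F2 b)) →
      y.1 = (Ideal.Quotient.mk I (F1 c), Ideal.Quotient.mk I (F2 d)) →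
      (mulQ x y).1 =
        (Ideal.Quotient.mk I (F1 a + ∑ i ∈ Finset.range n,
            MvPolynomial.C (c i) * (F2 b) ^ (p ^ i)),
         Ideal.Quotient.mk I (F2 b + ∑ i ∈ Finset.Ico 1 n,
            MvPolynomial.C (d i) * (F2 b) ^ (p ^ i))))
    (oneQ : Q)
    (hOneQ : oneQ.1 =
      (Ideal.Quotient.mk I (MvPolynomial.X 0), Ideal.Quotient.mk I (MvPolynomial.X 1)))
    (invQ : Q → Q)
    (hinvQ : ∀ x, mulQ (invQ x) x = oneQ ∧ mulQ x (invQ x) = oneQ)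
    -- G(R)
    (J : Ideal (Polynomial R))
    (hJ : J = Ideal.span {(X : Polynomial R) ^ (p ^ n)})
    (f2p : (ℕ → R) → Polynomial R)
    (hf2p : ∀ b, f2p b = X + ∑ k ∈ Finset.Ico 1 n, C (b k) * X ^ (p ^ k))
    (G : Set (Polynomial R ⧸ J))
    (hG : G = {q | ∃ b : ℕ → R, q = Ideal.Quotient.mk J (f2p b)})
    -- α : Aut_F(R) → G(R) is truncation modulo X^(p^n)
    (α : A → G)
    (hα : ∀ f : A, (α f).1 = Ideal.Quotient.mk J (PowerSeries.trunc (p ^ n) f.1))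
    -- β : Q(R) → G(R) sends (f₁, f₂) to the class of f₂
    (β : Q → G)
    (hβ : ∀ (a b : ℕ → R) (x : Q),
      x.1 = (Ideal.Quotient.mk I (F1 a), Ideal.Quotient.mk I (F2 b)) →
      (β x).1 = Ideal.Quotient.mk J (f2p b))
    -- the fiber product C(R)
    (Cset : Set (A × Q))
    (hC : Cset = {x | α x.1 = β x.2}) :
    -- C(R) is a subgroup of the product group
    ((oneA, oneQ) ∈ Cset ∧
      (∀ x ∈ Cset, ∀ y ∈ Cset, (mulA x.1 y.1, mulQ x.2 y.2) ∈ Cset) ∧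
      (∀ x ∈ Cset, (invA x.1, invQ x.2) ∈ Cset)) ∧
    -- the first projection C(R) → Aut_F(R) is a surjective group homomorphism
    ((∀ f : A, ∃ c ∈ Cset, c.1 = f) ∧
      (∀ c c' d : {x : A × Q // x ∈ Cset},
        d.1 = (mulA c.1.1 c'.1.1, mulQ c.1.2 c'.1.2) →
        d.1.1 = mulA c.1.1 c'.1.1)) ∧
    -- the kernel of the first projection is isomorphic to the additive group R^n
    (∃ e : {c : {x : A × Q // x ∈ Cset} // c.1.1 = oneA} → (Fin n → R),
      Function.Bijective e ∧
      (∀ c c' d : {c : {x : A × Q // x ∈ Cset} // c.1.1 = oneA},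
        d.1.1 = (mulA c.1.1.1 c'.1.1.1, mulQ c.1.1.2 c'.1.1.2) →
        e d = e c + e c')) :=
  stmt_15_general p n hp R hpR F hFadd A hA mulA hmulA oneA hOneA invA hinvA I hI F1 F2 hF1 hF2 Q hQ
    mulQ hmulQ oneQ hOneQ invQ hinvQ J hJ f2p hf2p G α hα β hβ Cset hC
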